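/- arXiv:1407.2083 — 3 statements merged into one kernel-verified Lean document; each statement's English description precedes it below -/
import Mathlib

section
/- As α → 0⁺, V(α) is comparable to α |log α|: there exist constants 0 < c ≤ C < ∞ and α₀ > 0 such that c · α |log α| ≤ V(α) ≤ C · α |log α| for all 0 < α < α₀. -/
open MeasureTheory Real Set

/-- `V a = (4/π²) ∫₀^∞ ∫₀^{a x} 1/((1+x²)(1+y²)) dy dx`. -/
noncomputable def V (a : ℝ) : ℝ :=
  (4 / Real.pi ^ 2) *
    ∫ x in Set.Ioi (0 : ℝ), (∫ y in (0 : ℝ)..(a * x), (1 + y ^ 2)⁻¹) * (1 + x ^ 2)⁻¹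

/-!
After the inner integration, `V a = (4/π²) ∫₀^∞ arctan (a x) / (1 + x²) dx`. Split at `x = 1/a`:
on `(0, 1/a]` the factor `arctan (a x)` is comparable to `a x` (`a x / 2 ≤ arctan (a x) ≤ a x`),
and `∫₁^{1/a} x / (1 + x²) dx ≈ |log a|`, which gives the order `a |log a|` from both sides; on
`(1/a, ∞)` the bound `arctan ≤ π/2` leaves `(π/2)(π/2 - arctan (1/a)) = (π/2) arctan a ≤ π a / 2`.
-/

namespace Real

lemma arctan_le_self {t : ℝ} (ht : 0 ≤ t) : arctan t ≤ t := by
  simpa only [tan_arctan] using le_tan (arctan_nonneg.2 ht) (arctan_lt_pi_div_two t)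

lemma mul_inv_one_add_sq_le_arctan {t : ℝ} (ht : 0 ≤ t) : t * (1 + t ^ 2)⁻¹ ≤ arctan t := by
  rw [← sub_zero (arctan t), ← arctan_zero, ← integral_inv_one_add_sq]
  calc t * (1 + t ^ 2)⁻¹ = ∫ _ in (0 : ℝ)..t, (1 + t ^ 2)⁻¹ := by simp
    _ ≤ ∫ x in (0 : ℝ)..t, (1 + x ^ 2)⁻¹ := by
      refine intervalIntegral.integral_mono_on ht intervalIntegrable_const
        (Continuous.intervalIntegrable (by fun_prop (disch := intro; positivity)) _ _)
        fun x ⟨hx0, hxt⟩ => ?_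
      gcongr

end Real

lemma integral_mul_inv_one_add_sq (a b : ℝ) :
    ∫ x in a..b, x * (1 + x ^ 2)⁻¹ = (log (1 + b ^ 2) - log (1 + a ^ 2)) / 2 := by
  have hderiv (x : ℝ) :
      HasDerivAt (fun y => log (1 + y ^ 2) / 2) (x * (1 + x ^ 2)⁻¹) x := by
    refine (((hasDerivAt_pow 2 x).const_add 1).log (by positivity)).div_const 2 |>.congr_deriv ?_
    simp only [Nat.cast_ofNat, Nat.add_one_sub_one, pow_one]
    ring
  rw [intervalIntegral.integral_eq_sub_of_hasDerivAt (fun x _ => hderiv x)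
    (Continuous.intervalIntegrable (by fun_prop (disch := intro; positivity)) _ _)]
  ring

lemma V_eq_integral_arctan (a : ℝ) :
    V a = 4 / π ^ 2 * ∫ x in Ioi 0, arctan (a * x) * (1 + x ^ 2)⁻¹ := by
  simp only [V, integral_inv_one_add_sq, arctan_zero, sub_zero]

lemma integrable_arctan_mul_mul_inv_one_add_sq (a : ℝ) :
    Integrable fun x => arctan (a * x) * (1 + x ^ 2)⁻¹ :=
  integrable_inv_one_add_sq.bdd_mul (c := π / 2) (by fun_prop : Continuous _).aestronglyMeasurable
    (.of_forall fun x => abs_le.2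
      ⟨(neg_pi_div_two_lt_arctan _).le, (arctan_lt_pi_div_two _).le⟩)

section ArctanIntegral

variable {a : ℝ}

lemma le_integral_arctan_mul (ha : 0 < a) (ha1 : a ≤ 1) :
    a / 4 * (log (1 + a⁻¹ ^ 2) - log 2) ≤ ∫ x in Ioi 0, arctan (a * x) * (1 + x ^ 2)⁻¹ := by
  have h1 : 1 ≤ a⁻¹ := (one_le_inv₀ ha).2 ha1
  calc a / 4 * (log (1 + a⁻¹ ^ 2) - log 2)
      = ∫ x in Ioc 1 a⁻¹, a / 2 * (x * (1 + x ^ 2)⁻¹) := by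
        rw [← intervalIntegral.integral_of_le h1, intervalIntegral.integral_const_mul,
          integral_mul_inv_one_add_sq]
        norm_num
        ring
    _ ≤ ∫ x in Ioc 1 a⁻¹, arctan (a * x) * (1 + x ^ 2)⁻¹ := by
        refine setIntegral_mono_on
          (by fun_prop (disch := intro; positivity) : Continuous _).integrableOn_Ioc
          (integrable_arctan_mul_mul_inv_one_add_sq a).integrableOn measurableSet_Ioc
          fun x ⟨hx1, hxa⟩ => ?_
        have hax : a * x ≤ 1 := (le_div_iff₀' ha).1 (by rwa [one_div])
        calc a / 2 * (x * (1 + x ^ 2)⁻¹) = a * x * (1 + 1)⁻¹ * (1 + x ^ 2)⁻¹ := by ring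
          _ ≤ a * x * (1 + (a * x) ^ 2)⁻¹ * (1 + x ^ 2)⁻¹ := by
            gcongr
            exact pow_le_one₀ (by positivity) hax
          _ ≤ arctan (a * x) * (1 + x ^ 2)⁻¹ := by
            gcongr
            exact mul_inv_one_add_sq_le_arctan (by positivity)
    _ ≤ ∫ x in Ioi 0, arctan (a * x) * (1 + x ^ 2)⁻¹ := by
        refine setIntegral_mono_set (integrable_arctan_mul_mul_inv_one_add_sq a).integrableOn
          ?_ (.of_forall fun x hx => zero_lt_one.trans hx.1)
        filter_upwards [ae_restrict_mem measurableSet_Ioi] with x hx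
        have : 0 ≤ arctan (a * x) := arctan_nonneg.2 (mul_pos ha hx).le
        positivity

lemma integral_arctan_mul_le (ha : 0 < a) :
    ∫ x in Ioi 0, arctan (a * x) * (1 + x ^ 2)⁻¹ ≤ a / 2 * log (1 + a⁻¹ ^ 2) + π / 2 * a := by
  have hint := integrable_arctan_mul_mul_inv_one_add_sq a
  rw [← Ioc_union_Ioi_eq_Ioi (inv_pos.2 ha).le, setIntegral_union (Ioc_disjoint_Ioi le_rfl)
    measurableSet_Ioi hint.integrableOn hint.integrableOn]
  gcongr ?_ + ?_
  · calc ∫ x in Ioc 0 a⁻¹, arctan (a * x) * (1 + x ^ 2)⁻¹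
        ≤ ∫ x in Ioc 0 a⁻¹, a * (x * (1 + x ^ 2)⁻¹) := by
          refine setIntegral_mono_on hint.integrableOn
            (by fun_prop (disch := intro; positivity) : Continuous _).integrableOn_Ioc
            measurableSet_Ioc fun x hx => ?_
          rw [← mul_assoc]
          gcongr
          exact arctan_le_self (mul_pos ha hx.1).le
      _ = a / 2 * log (1 + a⁻¹ ^ 2) := by
          rw [← intervalIntegral.integral_of_le (inv_pos.2 ha).le,
            intervalIntegral.integral_const_mul, integral_mul_inv_one_add_sq]
          norm_num
          ring
  · calc ∫ x in Ioi a⁻¹, arctan (a * x) * (1 + x ^ 2)⁻¹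
        ≤ ∫ x in Ioi a⁻¹, π / 2 * (1 + x ^ 2)⁻¹ := by
          refine setIntegral_mono_on hint.integrableOn
            (integrable_inv_one_add_sq.const_mul _).integrableOn measurableSet_Ioi
            fun x _ => ?_
          gcongr
          exact (arctan_lt_pi_div_two _).le
      _ = π / 2 * arctan a := by
          rw [integral_const_mul, integral_Ioi_inv_one_add_sq, arctan_inv_of_pos ha, sub_sub_cancel]
      _ ≤ π / 2 * a := by
          gcongr
          exact arctan_le_self ha.le

end ArctanIntegral

lemma abs_log_eq_log_inv {α : ℝ} (hα : 0 < α) (hα1 : α < 1) : |log α| = log α⁻¹ := by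
  rw [log_inv, abs_of_neg (log_neg hα hα1)]

section SmallParameter

variable {α : ℝ} (hα : 0 < α) (hα2 : α < 1 / 2)
include hα hα2

lemma log_two_le_log_inv : log 2 ≤ log α⁻¹ :=
  log_le_log two_pos ((le_inv_comm₀ two_pos hα).2 (by linarith))

lemma mul_abs_log_le_V : 1 / 10 * (α * |log α|) ≤ V α := by
  have hL := log_two_le_log_inv hα hα2
  have hlog : 2 * log α⁻¹ ≤ log (1 + α⁻¹ ^ 2) := by
    rw [← Nat.cast_ofNat, ← log_pow]
    exact log_le_log (by positivity) (by linarith)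
  have hπ : π ^ 2 ≤ 10 := by nlinarith [pi_lt_d2, pi_gt_three]
  have hL0 : 0 ≤ log α⁻¹ := (log_nonneg one_le_two).trans hL
  calc 1 / 10 * (α * |log α|) ≤ 1 / π ^ 2 * (α * log α⁻¹) := by
        rw [abs_log_eq_log_inv hα (by linarith)]
        gcongr
    _ = 4 / π ^ 2 * (α / 4 * log α⁻¹) := by ring
    _ ≤ 4 / π ^ 2 * (α / 4 * (log (1 + α⁻¹ ^ 2) - log 2)) := by gcongr; linarith
    _ ≤ V α := by
        rw [V_eq_integral_arctan]
        gcongr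
        exact le_integral_arctan_mul hα (by linarith)

lemma V_le_mul_abs_log : V α ≤ 2 * (α * |log α|) := by
  have hL := log_two_le_log_inv hα hα2
  have h1 : 1 ≤ α⁻¹ := by rw [one_le_inv₀ hα]; linarith
  have hlog : log (1 + α⁻¹ ^ 2) ≤ 3 * log α⁻¹ := by
    calc log (1 + α⁻¹ ^ 2) ≤ log (2 * α⁻¹ ^ 2) := log_le_log (by positivity) (by nlinarith)
      _ = log 2 + 2 * log α⁻¹ := by
        rw [log_mul two_ne_zero (by positivity), log_pow, Nat.cast_ofNat]
      _ ≤ 3 * log α⁻¹ := by linarith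
  have hL1 : 1 ≤ 3 / 2 * log α⁻¹ := by linarith [log_two_gt_d9]
  have hlog0 : 0 ≤ log (1 + α⁻¹ ^ 2) := log_nonneg (le_add_of_nonneg_right (by positivity))
  calc V α ≤ 4 / π ^ 2 * (α / 2 * log (1 + α⁻¹ ^ 2) + π / 2 * α) := by
        rw [V_eq_integral_arctan]
        gcongr
        exact integral_arctan_mul_le hα
    _ = 2 / π ^ 2 * (α * log (1 + α⁻¹ ^ 2)) + 2 / π * (α * 1) := by
        field_simp
        ring
    _ ≤ 2 / 3 ^ 2 * (α * (3 * log α⁻¹)) + 2 / 3 * (α * (3 / 2 * log α⁻¹)) := by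
        have := pi_gt_three.le
        gcongr
    _ ≤ 2 * (α * |log α|) := by
        rw [abs_log_eq_log_inv hα (by linarith)]
        nlinarith [mul_nonneg hα.le ((log_nonneg one_le_two).trans hL)]

end SmallParameter

theorem statement_3 :
    ∃ c C α₀ : ℝ, 0 < c ∧ c ≤ C ∧ 0 < α₀ ∧
      ∀ α : ℝ, 0 < α → α < α₀ →
        c * (α * |Real.log α|) ≤ V α ∧ V α ≤ C * (α * |Real.log α|) :=
  ⟨1 / 10, 2, 1 / 2, by norm_num, by norm_num, by norm_num, fun _ hα hα2 =>
    ⟨mul_abs_log_le_V hα hα2, V_le_mul_abs_log hα hα2⟩⟩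
end

section
/- Let α be as in the setting and let D = {n ∈ ℕ : α(t_n) > (log log t_n)^{−2}} with t_n = exp(e^n). If ∫^∞ α(t)|log α(t)|/(t log t) dt = ∞, then Σ_{n ∈ D} α(t_n)|log α(t_n)| = ∞; in particular Σ_{n ∉ D} α(t_n)|log α(t_n)| < ∞ always holds. -/
open MeasureTheory Real Set Filter

/-!
For `n ∉ D` we have `α(t_n) ≤ n⁻²`, and `x |log x| ≤ 4 x^{3/4}` on `[0, 1]` makes these terms
`O(n^{-3/2})`. Hence if the sum over `D` converged, the whole series `Σ α(t_n) |log α(t_n)|` would.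
Since `t_{n+1} = t_n ^ e`, the regularity condition gives `α(t_n) / 2 ≤ α ≤ α(t_n)` on
`[t_n, t_{n+1}]`, so there the integrand is at most `2 α(t_n) |log α(t_n)| / (s log s)`, while
`∫_{t_n}^{t_{n+1}} ds / (s log s) = 1`; summing over these blocks gives integrability.
-/

lemma mul_abs_log_le_four_mul_rpow {x : ℝ} (hx0 : 0 ≤ x) (hx1 : x ≤ 1) :
    x * |log x| ≤ 4 * x ^ (3 / 4 : ℝ) := by
  rcases hx0.eq_or_lt with rfl | hx
  · simp
  have hsplit : x = x ^ (3 / 4 : ℝ) * x ^ (1 / 4 : ℝ) := by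
    rw [← rpow_add hx]; norm_num
  have h := (abs_log_mul_self_rpow_lt x (1 / 4) hx hx1 (by norm_num)).le
  rw [abs_mul, abs_of_pos (rpow_pos_of_pos hx _)] at h
  calc x * |log x| = x ^ (3 / 4 : ℝ) * (|log x| * x ^ (1 / 4 : ℝ)) := by
        nth_rw 1 [hsplit]; ring
    _ ≤ x ^ (3 / 4 : ℝ) * (1 / (1 / 4)) := by gcongr
    _ = 4 * x ^ (3 / 4 : ℝ) := by ring

lemma summable_mul_abs_log_of_le_inv_sq {a : ℕ → ℝ} {S : Set ℕ} (h0 : ∀ n ∈ S, 0 ≤ a n)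
    (h : ∀ n ∈ S, a n ≤ ((n : ℝ) ^ 2)⁻¹) : Summable fun n : S => a n * |log (a n)| := by
  have hmajor : Summable fun n : ℕ => 4 * (n : ℝ) ^ (-(3 / 2) : ℝ) :=
    (summable_nat_rpow.2 (by norm_num)).mul_left 4
  refine (hmajor.subtype S).of_nonneg_of_le (fun n => mul_nonneg (h0 n n.2) (abs_nonneg _))
    fun ⟨n, hn⟩ => ?_
  have hinv : ((n : ℝ) ^ 2)⁻¹ ≤ 1 := by
    rcases n.eq_zero_or_pos with rfl | hpos
    · simp
    · exact inv_le_one_of_one_le₀ (one_le_pow₀ (by exact_mod_cast hpos))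
  calc a n * |log (a n)| ≤ 4 * a n ^ (3 / 4 : ℝ) :=
        mul_abs_log_le_four_mul_rpow (h0 n hn) ((h n hn).trans hinv)
    _ ≤ 4 * (((n : ℝ) ^ 2)⁻¹) ^ (3 / 4 : ℝ) := by gcongr; exacts [h0 n hn, h n hn]
    _ = 4 * (n : ℝ) ^ (-(3 / 2) : ℝ) := by
        rw [← rpow_natCast, ← rpow_neg (Nat.cast_nonneg n), ← rpow_mul (Nat.cast_nonneg n)]
        norm_num

lemma mul_abs_log_le_two_mul_of_half_le {x y : ℝ} (hy : 0 < y) (hxy : x / 2 ≤ y) (hyx : y ≤ x)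
    (hx : x ≤ exp (-1)) : y * |log y| ≤ 2 * (x * |log x|) := by
  have hlogx : log x ≤ -1 := by simpa using log_le_log (hy.trans_le hyx) hx
  have hlogy : log x - log 2 ≤ log y := by
    rw [← log_div (hy.trans_le hyx).ne' two_ne_zero]
    exact log_le_log (by linarith) hxy
  rw [abs_of_nonpos (by linarith [log_le_log hy hyx]), abs_of_nonpos (by linarith)]
  have hlog2 : log 2 < 1 := by linarith [log_two_lt_d9]
  nlinarith

lemma integrableOn_Icc_inv_mul_log {a b : ℝ} (ha : 1 < a) :
    IntegrableOn (fun x => (x * log x)⁻¹) (Icc a b) := by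
  have hone {x : ℝ} (hx : x ∈ Icc a b) : 1 < x := ha.trans_le hx.1
  refine ((continuousOn_id.mul (continuousOn_log.mono fun x hx => ?_)).inv₀ fun x hx => ?_)
    |>.integrableOn_Icc
  · exact (zero_lt_one.trans (hone hx)).ne'
  · exact (mul_pos (zero_lt_one.trans (hone hx)) (log_pos (hone hx))).ne'

lemma integral_inv_mul_log {a b : ℝ} (ha : 1 < a) (hab : a ≤ b) :
    ∫ x in a..b, (x * log x)⁻¹ = log (log b) - log (log a) := by
  have hint : IntegrableOn (fun x => (x * log x)⁻¹) (uIcc a b) := by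
    rw [uIcc_of_le hab]; exact integrableOn_Icc_inv_mul_log ha
  refine intervalIntegral.integral_eq_sub_of_hasDerivAt (f := fun x => log (log x))
    (fun x hx => ?_) hint.intervalIntegrable
  rw [uIcc_of_le hab] at hx
  have hx1 := ha.trans_le hx.1
  rw [mul_inv, ← div_eq_mul_inv]
  exact (hasDerivAt_log (zero_lt_one.trans hx1).ne').log (log_pos hx1).ne'

section InvMulLogMajorant

variable {E : Type*} [NormedAddCommGroup E] {f : ℝ → E} {a b C : ℝ}

lemma integrableOn_Ico_of_norm_le_inv_mul_log (ha : 1 < a)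
    (hf : AEStronglyMeasurable f (volume.restrict (Ico a b)))
    (hbound : ∀ x ∈ Ico a b, ‖f x‖ ≤ C * (x * log x)⁻¹) : IntegrableOn f (Ico a b) :=
  ((integrableOn_Icc_inv_mul_log ha).mono_set Ico_subset_Icc_self).const_mul C |>.mono' hf <|
    (ae_restrict_iff' measurableSet_Ico).2 (.of_forall hbound)

lemma integral_norm_Ico_le_of_norm_le_inv_mul_log (ha : 1 < a) (hab : a ≤ b)
    (hf : AEStronglyMeasurable f (volume.restrict (Ico a b)))
    (hbound : ∀ x ∈ Ico a b, ‖f x‖ ≤ C * (x * log x)⁻¹) :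
    ∫ x in Ico a b, ‖f x‖ ≤ C * (log (log b) - log (log a)) :=
  calc ∫ x in Ico a b, ‖f x‖ ≤ ∫ x in Ico a b, C * (x * log x)⁻¹ :=
        setIntegral_mono_on (integrableOn_Ico_of_norm_le_inv_mul_log ha hf hbound).norm
          (((integrableOn_Icc_inv_mul_log ha).mono_set Ico_subset_Icc_self).const_mul C)
          measurableSet_Ico hbound
    _ = C * (log (log b) - log (log a)) := by
        rw [integral_const_mul, integral_Ico_eq_integral_Ioo, ← integral_Ioc_eq_integral_Ioo,
          ← intervalIntegral.integral_of_le hab, integral_inv_mul_log ha hab]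

end InvMulLogMajorant

lemma integrableOn_Ici_of_summable_integral_norm_Ico {E : Type*} [NormedAddCommGroup E]
    {f : ℝ → E} {u : ℕ → ℝ} (hu : Monotone u) (hu_top : Tendsto u atTop atTop)
    (hf : ∀ n, IntegrableOn f (Ico (u n) (u (n + 1))))
    (hs : Summable fun n => ∫ x in Ico (u n) (u (n + 1)), ‖f x‖) :
    IntegrableOn f (Ici (u 0)) := by
  have hcover := iUnion_Ico_map_succ_eq_Ici (fun n => hu (Nat.zero_le n))
    (not_bddAbove_of_tendsto_atTop hu_top)
  simp only [Order.succ_eq_add_one, Nat.bot_eq_zero] at hcover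
  rw [← hcover]
  exact integrableOn_iUnion_of_summable_integral_norm hf hs

lemma exp_exp_rpow_exp_one (x : ℝ) : exp (exp x) ^ exp 1 = exp (exp (x + 1)) := by
  rw [← exp_mul, ← exp_add]

lemma norm_mul_abs_log_div_le_of_mem_Icc {α : ℝ → ℝ} (hpos : ∀ t > 0, 0 < α t)
    (hmono : AntitoneOn α (Ioi 0)) {a b x : ℝ} (ha : 1 < a) (hdouble : α a ≤ 2 * α b)
    (hsmall : α a ≤ exp (-1)) (hx : x ∈ Icc a b) :
    ‖α x * |log (α x)| / (x * log x)‖ ≤ 2 * (α a * |log (α a)|) * (x * log x)⁻¹ := by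
  have ha0 : 0 < a := zero_lt_one.trans ha
  have hx0 : 0 < x := ha0.trans_le hx.1
  have hlogx : 0 < log x := log_pos (ha.trans_le hx.1)
  have hαx_le : α x ≤ α a := hmono ha0 hx0 hx.1
  have hαx_ge : α b ≤ α x := hmono hx0 (hx0.trans_le hx.2) hx.2
  have hαx : α x * |log (α x)| ≤ 2 * (α a * |log (α a)|) :=
    mul_abs_log_le_two_mul_of_half_le (hpos x hx0) (by linarith) hαx_le hsmall
  rw [norm_div, norm_of_nonneg (mul_nonneg (hpos x hx0).le (abs_nonneg _)),
    norm_of_nonneg (by positivity), div_eq_mul_inv]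
  gcongr

lemma aestronglyMeasurable_mul_abs_log_div {α : ℝ → ℝ} (hmono : AntitoneOn α (Ioi 0)) :
    AEStronglyMeasurable (fun s => α s * |log (α s)| / (s * log s)) (volume.restrict (Ioi 0)) :=
  have hα := aemeasurable_restrict_of_antitoneOn (μ := volume) measurableSet_Ioi hmono
  ((hα.mul (measurable_log.comp_aemeasurable hα).abs).div
    (measurable_id.mul measurable_log).aemeasurable).aestronglyMeasurable

lemma exists_integrableOn_Ici_of_summable {α : ℝ → ℝ} (hpos : ∀ t > 0, 0 < α t)
    (hmono : AntitoneOn α (Ioi 0)) (hlim : Tendsto α atTop (nhds 0))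
    (hreg : ∀ᶠ t in atTop, α t ≤ 2 * α (t ^ exp 1))
    (hs : Summable fun n : ℕ => α (exp (exp n)) * |log (α (exp (exp n)))|) :
    ∃ T > exp 1, IntegrableOn (fun s => α s * |log (α s)| / (s * log s)) (Ici T) := by
  set τ : ℕ → ℝ := fun n => exp (exp n) with hτ
  have hτ_mono : Monotone τ := fun m n hmn => exp_le_exp.2 (exp_le_exp.2 (Nat.cast_le.2 hmn))
  have hτ_top : Tendsto τ atTop atTop :=
    tendsto_exp_atTop.comp (tendsto_exp_atTop.comp tendsto_natCast_atTop_atTop)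
  have hτ_one (n : ℕ) : 1 < τ n := one_lt_exp_iff.2 (exp_pos _)
  have hτ_succ (n : ℕ) : τ n ^ exp 1 = τ (n + 1) := by
    simp only [hτ, exp_exp_rpow_exp_one, Nat.cast_succ]
  obtain ⟨N, hN1, hN⟩ : ∃ N ≥ 1, ∀ n ≥ N, α (τ n) ≤ 2 * α (τ (n + 1)) ∧ α (τ n) ≤ exp (-1) := by
    obtain ⟨N, hN⟩ := eventually_atTop.1 <| (hτ_top.eventually <|
      hreg.and (hlim.eventually (ge_mem_nhds (exp_pos (-1))))).and (eventually_ge_atTop 1)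
    exact ⟨N, (hN N le_rfl).2, fun n hn => by simpa only [hτ_succ] using (hN n hn).1⟩
  have hbound (n : ℕ) (hn : N ≤ n) := fun x (hx : x ∈ Ico (τ n) (τ (n + 1))) =>
    norm_mul_abs_log_div_le_of_mem_Icc hpos hmono (hτ_one n) (hN n hn).1 (hN n hn).2
      (Ico_subset_Icc_self hx)
  have hmeas (n : ℕ) := (aestronglyMeasurable_mul_abs_log_div hmono).mono_set
    fun x (hx : x ∈ Ico (τ n) (τ (n + 1))) => (zero_lt_one.trans (hτ_one n)).trans_le hx.1
  have hsN : Summable fun k => 2 * (α (τ (N + k)) * |log (α (τ (N + k)))|) := by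
    simpa only [add_comm N] using ((summable_nat_add_iff (G := ℝ) N).2 hs).mul_left 2
  have hint := integrableOn_Ici_of_summable_integral_norm_Ico (u := fun k => τ (N + k))
    (fun a b hab => hτ_mono (by omega)) (tendsto_atTop_mono (fun k => hτ_mono le_add_self) hτ_top)
    (fun k => integrableOn_Ico_of_norm_le_inv_mul_log (hτ_one _) (hmeas _) (hbound _ (by omega)))
    (hsN.of_nonneg_of_le (fun k => integral_nonneg fun _ => norm_nonneg _) fun k => ?_)
  · exact ⟨τ N, exp_lt_exp.2 (one_lt_exp_iff.2 (Nat.cast_pos.2 hN1)), by simpa using hint⟩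
  · calc _ ≤ 2 * (α (τ (N + k)) * |log (α (τ (N + k)))|) *
            (log (log (τ (N + k + 1))) - log (log (τ (N + k)))) :=
          integral_norm_Ico_le_of_norm_le_inv_mul_log (hτ_one _) (hτ_mono (Nat.le_succ _))
            (hmeas _) (hbound _ (by omega))
      _ = 2 * (α (τ (N + k)) * |log (α (τ (N + k)))|) := by
          simp only [hτ, log_exp, Nat.cast_succ, add_sub_cancel_left, mul_one]

theorem statement_7 (α : ℝ → ℝ)
    (hpos : ∀ t > 0, 0 < α t)
    (hmono : AntitoneOn α (Set.Ioi 0))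
    (hlim : Tendsto α atTop (nhds 0))
    (hreg : ∀ᶠ t in atTop, α t ≤ 2 * α (t ^ Real.exp 1))
    (t : ℕ → ℝ) (ht : ∀ n, t n = Real.exp (Real.exp n))
    (D : Set ℕ) (hD : D = {n : ℕ | (Real.log (Real.log (t n)) ^ 2)⁻¹ < α (t n)}) :
    ((¬ ∃ T > Real.exp 1,
        IntegrableOn (fun s => α s * |Real.log (α s)| / (s * Real.log s)) (Set.Ici T)) →
      ¬ Summable (fun n : D => α (t n) * |Real.log (α (t n))|)) ∧
    Summable (fun n : ↥Dᶜ => α (t n) * |Real.log (α (t n))|) := by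
  obtain rfl : t = fun n : ℕ => exp (exp n) := funext ht
  have hcompl : Summable fun n : ↥Dᶜ => α (exp (exp n)) * |log (α (exp (exp n)))| :=
    summable_mul_abs_log_of_le_inv_sq (a := fun n : ℕ => α (exp (exp n)))
      (fun n _ => (hpos _ (exp_pos _)).le) fun n hn => by
      simpa [hD, log_exp] using hn
  exact ⟨fun hnot hsD => hnot <| exists_integrableOn_Ici_of_summable hpos hmono hlim hreg <|
    hsD.add_compl hcompl, hcompl⟩
end

section
/- Suppose events (A_n) satisfy: there is a constant C such that for all j > k either P(A_j ∩ A_k) = P(A_j)P(A_k) or P(A_j ∩ A_k) ≤ P(A_j) c_{k,j} with Σ_{k < j} c_{k,j} ≤ C for every j. If Σ P(A_n) = ∞, then Σ_{j,k≤n} P(A_j ∩ A_k) ≤ (Σ_{j≤n} P(A_j))² + (2C+1) Σ_{j≤n} P(A_j), so the Kochen–Stone condition liminf (Σ_{j,k≤n} P(A_j∩A_k))/(Σ_{j≤n} P(A_j))² < ∞ holds. -/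
/-!
Bounding `P(A_j ∩ A_k)` by `P(A_j) P(A_k) + P(A_j) c_{k,j}` off the diagonal and by `P(A_j)` on it,
the double sum `∑_{j,k<n} P(A_j ∩ A_k)` grows by at most `2 p_n (S_n + C) + p_n` when the index `n`
is added, where `p_n = P(A_n)` and `S_n = ∑_{j<n} p_j`; this gives `S_n² + (2C+1) S_n` by induction.
Since `S_n → ∞`, eventually `2C + 1 ≤ S_n`, so the ratio in the Kochen–Stone condition is at most `2`.
-/

open MeasureTheory ProbabilityTheory Filter Finset

theorem sum_range_sum_range_le_sq_add_mul {a : ℕ → ℕ → ENNReal} {p : ℕ → ENNReal}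
    {c : ℕ → ℕ → ENNReal} {C : ENNReal} (hsymm : ∀ j k, a j k = a k j) (hdiag : ∀ j, a j j ≤ p j)
    (hoff : ∀ j k, k < j → a j k ≤ p j * p k + p j * c k j)
    (hsum : ∀ j, ∑ k ∈ range j, c k j ≤ C) (n : ℕ) :
    ∑ j ∈ range n, ∑ k ∈ range n, a j k ≤
      (∑ j ∈ range n, p j) ^ 2 + (2 * C + 1) * ∑ j ∈ range n, p j := by
  induction n with
  | zero => simp
  | succ n ih =>
    set S := ∑ j ∈ range n, p j
    have hrow : ∑ k ∈ range n, a n k ≤ p n * S + p n * C :=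
      calc ∑ k ∈ range n, a n k
          ≤ ∑ k ∈ range n, (p n * p k + p n * c k n) :=
            sum_le_sum fun k hk => hoff n k (mem_range.mp hk)
        _ = p n * S + p n * ∑ k ∈ range n, c k n := by
            rw [sum_add_distrib, mul_sum, mul_sum]
        _ ≤ p n * S + p n * C := by gcongr; exact hsum n
    have hsplit : ∑ j ∈ range (n + 1), ∑ k ∈ range (n + 1), a j k =
        ∑ j ∈ range n, ∑ k ∈ range n, a j k + 2 * ∑ k ∈ range n, a n k + a n n := by
      simp only [sum_range_succ, sum_add_distrib, hsymm _ n]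
      ring
    calc ∑ j ∈ range (n + 1), ∑ k ∈ range (n + 1), a j k
        ≤ S ^ 2 + (2 * C + 1) * S + 2 * (p n * S + p n * C) + p n := by
          rw [hsplit]; gcongr; exact hdiag n
      _ ≤ S ^ 2 + (2 * C + 1) * S + 2 * (p n * S + p n * C) + p n + p n ^ 2 := le_self_add
      _ = (∑ j ∈ range (n + 1), p j) ^ 2 + (2 * C + 1) * ∑ j ∈ range (n + 1), p j := by
          rw [sum_range_succ]; ring

theorem liminf_div_sq_lt_top_of_le_sq_add_mul {a S : ℕ → ENNReal} {M : ENNReal} (hM : M ≠ ⊤)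
    (hS : Tendsto S atTop (nhds ⊤)) (ha : ∀ n, a n ≤ S n ^ 2 + M * S n) :
    liminf (fun n => a n / S n ^ 2) atTop < ⊤ := by
  have hratio : ∀ᶠ n in atTop, a n / S n ^ 2 ≤ 2 := by
    filter_upwards [hS.eventually (eventually_ge_nhds hM.lt_top)] with n hMS
    refine ENNReal.div_le_of_le_mul ?_
    calc a n ≤ S n ^ 2 + S n * S n := (ha n).trans (by gcongr)
      _ = 2 * S n ^ 2 := by ring
  exact (liminf_le_of_frequently_le' hratio.frequently).trans_lt ENNReal.ofNat_lt_top

theorem statement_19_general {Ω : Type*} [MeasureSpace Ω]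
    (A : ℕ → Set Ω)
    (c : ℕ → ℕ → ENNReal) (C : ENNReal) (hC : C ≠ ⊤)
    (hpair : ∀ j k, k < j →
      ℙ (A j ∩ A k) = ℙ (A j) * ℙ (A k) ∨ ℙ (A j ∩ A k) ≤ ℙ (A j) * c k j)
    (hsum : ∀ j, ∑ k ∈ Finset.range j, c k j ≤ C)
    (hdiv : ∑' n, ℙ (A n) = ⊤) :
    (∀ n, ∑ j ∈ Finset.range n, ∑ k ∈ Finset.range n, ℙ (A j ∩ A k) ≤
        (∑ j ∈ Finset.range n, ℙ (A j)) ^ 2 +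
          (2 * C + 1) * ∑ j ∈ Finset.range n, ℙ (A j)) ∧
    Filter.liminf
        (fun n => (∑ j ∈ Finset.range n, ∑ k ∈ Finset.range n, ℙ (A j ∩ A k)) /
          (∑ j ∈ Finset.range n, ℙ (A j)) ^ 2) atTop < ⊤ := by
  have hoff : ∀ j k, k < j → ℙ (A j ∩ A k) ≤ ℙ (A j) * ℙ (A k) + ℙ (A j) * c k j := by
    intro j k hkj
    rcases hpair j k hkj with h | h
    exacts [h.trans_le le_self_add, h.trans le_add_self]
  have hbound := sum_range_sum_range_le_sq_add_mul (fun j k => by rw [Set.inter_comm])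
    (fun j => by rw [Set.inter_self]) hoff hsum
  have hdiverge : Tendsto (fun n => ∑ j ∈ range n, ℙ (A j)) atTop (nhds ⊤) :=
    hdiv ▸ ENNReal.tendsto_nat_tsum _
  exact ⟨hbound, liminf_div_sq_lt_top_of_le_sq_add_mul (by finiteness) hdiverge hbound⟩

theorem statement_19 {Ω : Type*} [MeasureSpace Ω] [IsProbabilityMeasure (ℙ : Measure Ω)]
    (A : ℕ → Set Ω) (hA : ∀ n, MeasurableSet (A n))
    (c : ℕ → ℕ → ENNReal) (C : ENNReal) (hC : C ≠ ⊤)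
    (hpair : ∀ j k, k < j →
      ℙ (A j ∩ A k) = ℙ (A j) * ℙ (A k) ∨ ℙ (A j ∩ A k) ≤ ℙ (A j) * c k j)
    (hsum : ∀ j, ∑ k ∈ Finset.range j, c k j ≤ C)
    (hdiv : ∑' n, ℙ (A n) = ⊤) :
    (∀ n, ∑ j ∈ Finset.range n, ∑ k ∈ Finset.range n, ℙ (A j ∩ A k) ≤
        (∑ j ∈ Finset.range n, ℙ (A j)) ^ 2 +
          (2 * C + 1) * ∑ j ∈ Finset.range n, ℙ (A j)) ∧
    Filter.liminf
        (fun n => (∑ j ∈ Finset.range n, ∑ k ∈ Finset.range n, ℙ (A j ∩ A k)) /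
          (∑ j ∈ Finset.range n, ℙ (A j)) ^ 2) atTop < ⊤ :=
  statement_19_general A c C hC hpair hsum hdiv
end
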